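/- Define \Phi_n(b,c) = \frac{\Gamma(c)}{\Gamma(b)\Gamma(c-b)} \int_0^1 t^{n+b-1}(1-t)^{n+c-b-1}(t-1/2)^n dt. Then \Phi_{n+1}(b,c) = \frac{b(b+1)(c-b)}{c(c+1)(c+2)} \Phi_n(b+2, c+3) - \frac{b(c-b)}{2c(c+1)} \Phi_n(b+1, c+2) for all nonnegative integers n. -/
import Mathlib


open Complex

noncomputable def Phi3 (b c : ℂ) (n : ℕ) : ℂ :=
  Complex.Gamma c / (Complex.Gamma b * Complex.Gamma (c - b)) *
    ∫ t in (0:ℝ)..1,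
      (t : ℂ) ^ ((n : ℂ) + b - 1) * (1 - (t : ℂ)) ^ ((n : ℂ) + c - b - 1) * ((t : ℂ) - 1/2) ^ n

lemma phiInt (p q : ℂ) (hp : -1 < p.re) (hq : -1 < q.re) (n : ℕ) :
    IntervalIntegrable
      (fun t : ℝ => (t : ℂ) ^ p * (1 - (t : ℂ)) ^ q * ((t : ℂ) - 1/2) ^ n)
      MeasureTheory.volume 0 1 := by
  have h1 : 0 < (p + 1).re := by simp [Complex.add_re]; linarith
  have h2 : 0 < (q + 1).re := by simp [Complex.add_re]; linarith
  have := (Complex.betaIntegral_convergent h1 h2).mul_continuousOn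
    (g := fun t : ℝ => ((t : ℂ) - 1/2) ^ n)
    (Continuous.continuousOn (by continuity))
  simpa using this

set_option maxHeartbeats 1000000 in
theorem Phi3_contiguous (b c : ℂ) (hb : 0 < b.re) (hbc : b.re < c.re) (n : ℕ) :
    Phi3 b c (n + 1) =
      b * (b + 1) * (c - b) / (c * (c + 1) * (c + 2)) * Phi3 (b + 2) (c + 3) n -
        b * (c - b) / (2 * c * (c + 1)) * Phi3 (b + 1) (c + 2) n := by
  have hc : 0 < c.re := hb.trans hbc
  have hcb : 0 < (c - b).re := by simp [Complex.sub_re]; linarith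
  have hb0 : b ≠ 0 := fun h => by simp [h] at hb
  have hb1 : b + 1 ≠ 0 := fun h => by
    have := congrArg Complex.re h; simp [Complex.add_re] at this; linarith
  have hc0 : c ≠ 0 := fun h => by simp [h] at hc
  have hc1 : c + 1 ≠ 0 := fun h => by
    have := congrArg Complex.re h; simp [Complex.add_re] at this; linarith
  have hc2 : c + 2 ≠ 0 := fun h => by
    have := congrArg Complex.re h; simp [Complex.add_re] at this; linarith
  have hcb0 : c - b ≠ 0 := fun h => by simp [h] at hcb
  have hGb : Complex.Gamma b ≠ 0 := Complex.Gamma_ne_zero_of_re_pos hb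
  have hGcb : Complex.Gamma (c - b) ≠ 0 := Complex.Gamma_ne_zero_of_re_pos hcb
  -- Gamma recurrences
  have hGc3 : Complex.Gamma (c + 3) = (c + 2) * ((c + 1) * (c * Complex.Gamma c)) := by
    rw [show c + 3 = c + 2 + 1 by ring, Complex.Gamma_add_one _ hc2,
      show c + 2 = c + 1 + 1 by ring, Complex.Gamma_add_one _ hc1,
      Complex.Gamma_add_one _ hc0]
  have hGc2 : Complex.Gamma (c + 2) = (c + 1) * (c * Complex.Gamma c) := by
    rw [show c + 2 = c + 1 + 1 by ring, Complex.Gamma_add_one _ hc1,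
      Complex.Gamma_add_one _ hc0]
  have hGb2 : Complex.Gamma (b + 2) = (b + 1) * (b * Complex.Gamma b) := by
    rw [show b + 2 = b + 1 + 1 by ring, Complex.Gamma_add_one _ hb1,
      Complex.Gamma_add_one _ hb0]
  have hGb1 : Complex.Gamma (b + 1) = b * Complex.Gamma b :=
    Complex.Gamma_add_one _ hb0
  have hGcb1 : Complex.Gamma (c - b + 1) = (c - b) * Complex.Gamma (c - b) :=
    Complex.Gamma_add_one _ hcb0
  -- integrability
  have int1 : IntervalIntegrable
      (fun t : ℝ => (t : ℂ) ^ ((n : ℂ) + (b + 2) - 1) * (1 - (t : ℂ)) ^ ((n : ℂ) + (c + 3) - (b + 2) - 1) * ((t : ℂ) - 1/2) ^ n)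
      MeasureTheory.volume 0 1 := by
    apply phiInt <;>
      simp [Complex.add_re, Complex.sub_re, Complex.one_re, Complex.natCast_re] <;>
      · have : (0:ℝ) ≤ (n : ℝ) := Nat.cast_nonneg n
        linarith
  have int2 : IntervalIntegrable
      (fun t : ℝ => (t : ℂ) ^ ((n : ℂ) + (b + 1) - 1) * (1 - (t : ℂ)) ^ ((n : ℂ) + (c + 2) - (b + 1) - 1) * ((t : ℂ) - 1/2) ^ n)
      MeasureTheory.volume 0 1 := by
    apply phiInt <;>
      simp [Complex.add_re, Complex.sub_re, Complex.one_re, Complex.natCast_re] <;>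
      · have : (0:ℝ) ≤ (n : ℝ) := Nat.cast_nonneg n
        linarith
  -- integral identity
  have key : (∫ t in (0:ℝ)..1,
        (t : ℂ) ^ (((n + 1 : ℕ) : ℂ) + b - 1) * (1 - (t : ℂ)) ^ (((n + 1 : ℕ) : ℂ) + c - b - 1) * ((t : ℂ) - 1/2) ^ (n + 1)) =
      (∫ t in (0:ℝ)..1,
        (t : ℂ) ^ ((n : ℂ) + (b + 2) - 1) * (1 - (t : ℂ)) ^ ((n : ℂ) + (c + 3) - (b + 2) - 1) * ((t : ℂ) - 1/2) ^ n) -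
      (1/2) * ∫ t in (0:ℝ)..1,
        (t : ℂ) ^ ((n : ℂ) + (b + 1) - 1) * (1 - (t : ℂ)) ^ ((n : ℂ) + (c + 2) - (b + 1) - 1) * ((t : ℂ) - 1/2) ^ n := by
    rw [← intervalIntegral.integral_const_mul, ← intervalIntegral.integral_sub int1 (int2.const_mul _)]
    apply intervalIntegral.integral_congr
    intro t ht
    rw [Set.uIcc_of_le (by norm_num)] at ht
    have hexp : (((n + 1 : ℕ) : ℂ)) + c - b - 1 = (n : ℂ) + c - b := by push_cast; ring
    have hexp1 : ((n : ℂ)) + (c + 3) - (b + 2) - 1 = (n : ℂ) + c - b := by ring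
    have hexp2 : ((n : ℂ)) + (c + 2) - (b + 1) - 1 = (n : ℂ) + c - b := by ring
    have hexpt : (((n + 1 : ℕ) : ℂ)) + b - 1 = (n : ℂ) + b := by push_cast; ring
    have hexpt2 : ((n : ℂ)) + (b + 1) - 1 = (n : ℂ) + b := by ring
    have hexpt1 : ((n : ℂ)) + (b + 2) - 1 = (n : ℂ) + b + 1 := by ring
    rw [hexp, hexp1, hexp2, hexpt, hexpt1, hexpt2]
    beta_reduce
    rcases eq_or_ne t 0 with rfl | ht0
    · have h1 : (0 : ℂ) ^ ((n : ℂ) + b) = 0 := by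
        rw [Complex.zero_cpow]
        intro h
        have := congrArg Complex.re h
        simp [Complex.add_re, Complex.natCast_re] at this
        have : (0:ℝ) ≤ (n : ℝ) := Nat.cast_nonneg n
        linarith
      have h2 : (0 : ℂ) ^ ((n : ℂ) + b + 1) = 0 := by
        rw [Complex.zero_cpow]
        intro h
        have := congrArg Complex.re h
        simp [Complex.add_re, Complex.natCast_re] at this
        have : (0:ℝ) ≤ (n : ℝ) := Nat.cast_nonneg n
        linarith
      simp [Complex.ofReal_zero, h1, h2]
    · have hcpow : ((t:ℝ) : ℂ) ^ ((n : ℂ) + b + 1) = (t : ℂ) ^ ((n : ℂ) + b) * t := by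
        rw [Complex.cpow_add _ _ (Complex.ofReal_ne_zero.mpr ht0), Complex.cpow_one]
      rw [hcpow, pow_succ]
      ring
  simp only [Phi3]
  rw [key, hGc3, hGc2, hGb2, hGb1,
    show c + 3 - (b + 2) = c - b + 1 by ring, show c + 2 - (b + 1) = c - b + 1 by ring, hGcb1]
  set I1 := ∫ t in (0:ℝ)..1,
      (t : ℂ) ^ ((n : ℂ) + (b + 2) - 1) * (1 - (t : ℂ)) ^ ((n : ℂ) + (c + 3) - (b + 2) - 1) * ((t : ℂ) - 1/2) ^ n with hI1
  set I2 := ∫ t in (0:ℝ)..1,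
      (t : ℂ) ^ ((n : ℂ) + (b + 1) - 1) * (1 - (t : ℂ)) ^ ((n : ℂ) + (c + 2) - (b + 1) - 1) * ((t : ℂ) - 1/2) ^ n with hI2
  set Gb := Complex.Gamma b with hGbdef
  set Gcb := Complex.Gamma (c - b) with hGcbdef
  set Gc := Complex.Gamma c with hGcdef
  have e1 : b * (b + 1) * (c - b) / (c * (c + 1) * (c + 2)) *
      ((c + 2) * ((c + 1) * (c * Gc)) / ((b + 1) * (b * Gb) * ((c - b) * Gcb))) = Gc / (Gb * Gcb) := by
    rw [div_mul_div_comm, div_eq_div_iff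
      (mul_ne_zero (mul_ne_zero (mul_ne_zero hc0 hc1) hc2)
        (mul_ne_zero (mul_ne_zero hb1 (mul_ne_zero hb0 hGb)) (mul_ne_zero hcb0 hGcb)))
      (mul_ne_zero hGb hGcb)]
    ring
  have e2 : b * (c - b) / (2 * c * (c + 1)) *
      ((c + 1) * (c * Gc) / (b * Gb * ((c - b) * Gcb))) = Gc / (Gb * Gcb) * (1 / 2) := by
    rw [div_mul_div_comm, div_mul_div_comm, div_eq_div_iff
      (mul_ne_zero (mul_ne_zero (mul_ne_zero two_ne_zero hc0) hc1)
        (mul_ne_zero (mul_ne_zero hb0 hGb) (mul_ne_zero hcb0 hGcb)))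
      (mul_ne_zero (mul_ne_zero hGb hGcb) two_ne_zero)]
    ring
  linear_combination I2 * e2 - I1 * e1
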